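/- Fixing γ_acc ∈ (0,1) and r_n < 0, there exists γ' ∈ (0,1) such that for every γ ∈ (γ', 1), every policy π* that is optimal for discount γ, and every state s ∈ S: μ^{π*}_s(Safe) = max_π μ^π_s(Safe), i.e., an optimal policy attains the maximum satisfaction probability of the safety condition at every state. -/

import Mathlib

open MeasureTheory Set
open scoped ENNReal Classical

variable {S : Type*}

def IsPathMeasure [MeasurableSpace S] (P : S → PMF S) (μ : S → Measure (ℕ → S)) : Prop :=
  (∀ s, IsProbabilityMeasure (μ s)) ∧
    ∀ (s : S) (n : ℕ) (x : ℕ → S),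
      μ s {ω | ∀ i ≤ n, ω i = x i} =
        (if x 0 = s then 1 else 0) * ∏ i ∈ Finset.range n, (P (x i)) (x (i + 1))

noncomputable def Rw (Acc : Set S) (γacc rn : ℝ) (s : S) : ℝ :=
  if s ∈ Acc then (1 - γacc) * rn else 0

noncomputable def Γw (Acc : Set S) (γacc γ : ℝ) (s : S) : ℝ :=
  if s ∈ Acc then γacc else γ

noncomputable def Ret (Acc : Set S) (γacc γ rn : ℝ) (ω : ℕ → S) : ℝ :=
  ∑' t : ℕ, Rw Acc γacc rn (ω (t + 1)) * ∏ k ∈ Finset.range t, Γw Acc γacc γ (ω (k + 1))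

noncomputable def Val [MeasurableSpace S] (Acc : Set S) (γacc γ rn : ℝ)
    (μ : S → Measure (ℕ → S)) (s : S) : ℝ :=
  ∫ ω, Ret Acc γacc γ rn ω ∂ (μ s)

variable {A : S → Type*}

noncomputable def Valp [MeasurableSpace S] (Acc : Set S) (γacc γ rn : ℝ)
    (μ : ((s : S) → A s) → S → Measure (ℕ → S)) (π : (s : S) → A s) (s : S) : ℝ :=
  ∫ ω, Ret Acc γacc γ rn ω ∂ (μ π s)

noncomputable def Qp [MeasurableSpace S] [Fintype S]
    (P : (s : S) → A s → PMF S) (Acc : Set S) (γacc γ rn : ℝ)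
    (μ : ((s : S) → A s) → S → Measure (ℕ → S)) (π : (s : S) → A s) (s : S) (a : A s) : ℝ :=
  ∑ s' : S, (P s a s').toReal *
    (Rw Acc γacc rn s' + Γw Acc γacc γ s' * Valp Acc γacc γ rn μ π s')

noncomputable def Qstar [MeasurableSpace S] [Fintype S]
    (P : (s : S) → A s → PMF S) (Acc : Set S) (γacc γ rn : ℝ)
    (μ : ((s : S) → A s) → S → Measure (ℕ → S)) (s : S) (a : A s) : ℝ :=
  ⨆ π : (s' : S) → A s', Qp P Acc γacc γ rn μ π s a

def WinRegion [MeasurableSpace S] (Acc : Set S)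
    (μ : ((s : S) → A s) → S → Measure (ℕ → S)) : Set S :=
  {s | ∃ π : (s' : S) → A s', μ π s {ω | ∀ t, ω t ∉ Acc} = 1}

def IsOptimal [MeasurableSpace S] (Acc : Set S) (γacc γ rn : ℝ)
    (μ : ((s : S) → A s) → S → Measure (ℕ → S)) (πo : (s : S) → A s) : Prop :=
  ∀ s, Valp Acc γacc γ rn μ πo s = ⨆ π : (s' : S) → A s', Valp Acc γacc γ rn μ π s

/-!
Along a path that stays in `Acc` once it enters it, the return is `rn * γ ^ T` if the path
first enters `Acc` at time `T + 1`, and `0` if it never does. Hence, as `γ → 1⁻`, dominated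
convergence sends the value of every policy to `rn` times its probability of violating safety.
Since `rn < 0`, a policy that is strictly less safe at some state than another has, for `γ` close
to `1`, a strictly smaller value there; with finitely many policies and states one threshold
works for all of them, and an optimal policy can therefore not be less safe than any other.
-/

open Filter Topology

noncomputable def retTerm (Acc : Set S) (γacc γ rn : ℝ) (ω : ℕ → S) (t : ℕ) : ℝ :=
  Rw Acc γacc rn (ω (t + 1)) * ∏ k ∈ Finset.range t, Γw Acc γacc γ (ω (k + 1))

def safeSet (Acc : Set S) : Set (ℕ → S) := {ω | ∀ t, ω t ∉ Acc}

section Path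

variable {Acc : Set S} {γacc γ rn : ℝ} {ω : ℕ → S}

theorem ret_eq_of_hasSum {a : ℝ} (h : HasSum (retTerm Acc γacc γ rn ω) a) :
    Ret Acc γacc γ rn ω = a :=
  h.tsum_eq

theorem hasSum_retTerm_of_forall_notMem (h : ∀ t, ω (t + 1) ∉ Acc) :
    HasSum (retTerm Acc γacc γ rn ω) 0 := by
  convert hasSum_zero with t
  simp [retTerm, Rw, h]

theorem hasSum_retTerm_of_first_hit (hγacc₀ : 0 ≤ γacc) (hγacc₁ : γacc < 1)
    (habs : ∀ t, ω t ∈ Acc → ω (t + 1) ∈ Acc) {T : ℕ} (hT : ω (T + 1) ∈ Acc)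
    (hbefore : ∀ k < T, ω (k + 1) ∉ Acc) :
    HasSum (retTerm Acc γacc γ rn ω) (rn * γ ^ T) := by
  have hafter : ∀ i, ω (T + i + 1) ∈ Acc := fun i => by
    induction i with
    | zero => exact hT
    | succ i ih => exact habs _ ih
  have hdiscount : ∀ i, ∏ k ∈ Finset.range (i + T), Γw Acc γacc γ (ω (k + 1)) =
      γ ^ T * γacc ^ i := by
    intro i
    rw [add_comm, Finset.prod_range_add]
    congr 1
    · rw [Finset.prod_congr rfl (g := fun _ => γ) fun k hk => by
        simp [Γw, hbefore k (Finset.mem_range.1 hk)], Finset.prod_const, Finset.card_range]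
    · simp [Γw, hafter]
  have hshift : HasSum (fun i => retTerm Acc γacc γ rn ω (i + T)) (rn * γ ^ T) := by
    have hterm : (fun i => retTerm Acc γacc γ rn ω (i + T)) =
        fun i => (1 - γacc) * rn * γ ^ T * γacc ^ i := by
      funext i
      rw [retTerm, hdiscount, Rw, if_pos (by simpa [add_comm i T] using hafter i)]
      ring
    have hgeom : (1 - γacc) * rn * γ ^ T * (1 - γacc)⁻¹ = rn * γ ^ T := by
      field_simp [(sub_pos.2 hγacc₁).ne']
    rw [hterm, ← hgeom]
    exact (hasSum_geometric_of_lt_one hγacc₀ hγacc₁).mul_left _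
  rw [← hasSum_nat_add_iff' T, Finset.sum_eq_zero fun k hk => by
    simp [retTerm, Rw, hbefore k (Finset.mem_range.1 hk)], sub_zero]
  exact hshift

theorem exists_hasSum_retTerm (hγacc₀ : 0 ≤ γacc) (hγacc₁ : γacc < 1)
    (habs : ∀ t, ω t ∈ Acc → ω (t + 1) ∈ Acc) :
    ∃ T : ℕ, ∀ γ, HasSum (retTerm Acc γacc γ rn ω)
      ((safeSet Acc)ᶜ.indicator (fun _ => rn * γ ^ T) ω) := by
  by_cases hhit : ∃ t, ω (t + 1) ∈ Acc
  · have hunsafe : ω ∈ (safeSet Acc)ᶜ := fun hsafe => hsafe _ (Nat.find_spec hhit)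
    refine ⟨Nat.find hhit, fun γ => ?_⟩
    rw [indicator_of_mem hunsafe]
    exact hasSum_retTerm_of_first_hit hγacc₀ hγacc₁ habs (Nat.find_spec hhit)
      fun k hk => Nat.find_min hhit hk
  · push Not at hhit
    have hsafe : ω ∈ safeSet Acc
      | 0, h0 => hhit 0 (habs 0 h0)
      | t + 1, ht => hhit t ht
    exact ⟨0, fun γ => by
      simpa [hsafe] using hasSum_retTerm_of_forall_notMem hhit⟩

end Path

section PathMeasure

variable [MeasurableSpace S] [Countable S]

theorem ae_measure_cylinder_ne_zero (ν : Measure (ℕ → S)) :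
    ∀ᵐ ω ∂ν, ∀ n, ν {ω' | ∀ i ≤ n, ω' i = ω i} ≠ 0 := by
  refine ae_all_iff.2 fun n => ?_
  let cyl : (Fin (n + 1) → S) → Set (ℕ → S) := fun v => {ω | ∀ i : Fin (n + 1), ω i = v i}
  have hcyl : ∀ ω : ℕ → S, {ω' | ∀ i ≤ n, ω' i = ω i} = cyl (fun i => ω i) := by
    intro ω
    ext ω'
    simp [cyl, Fin.forall_iff]
  refine measure_mono_null (t := ⋃ v ∈ {v | ν (cyl v) = 0}, cyl v) ?_
    ((measure_biUnion_null_iff (Set.to_countable _)).2 fun v hv => hv)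
  intro ω hω
  have hnull : ν (cyl fun i => ω i) = 0 := by rw [← hcyl]; exact not_not.1 hω
  exact mem_biUnion hnull fun i => rfl

variable {p : S → PMF S} {ν : S → Measure (ℕ → S)}

theorem IsPathMeasure.ae_transition_ne_zero (hν : IsPathMeasure p ν) (s : S) :
    ∀ᵐ ω ∂ν s, ∀ t, p (ω t) (ω (t + 1)) ≠ 0 := by
  filter_upwards [ae_measure_cylinder_ne_zero (ν s)] with ω hω t
  have hprod := right_ne_zero_of_mul (hν.2 s (t + 1) ω ▸ hω (t + 1))
  exact Finset.prod_ne_zero_iff.1 hprod t (Finset.self_mem_range_succ t)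

theorem IsPathMeasure.ae_absorbing (hν : IsPathMeasure p ν) {Acc : Set S}
    (habs : ∀ s ∈ Acc, (p s).support ⊆ Acc) (s : S) :
    ∀ᵐ ω ∂ν s, ∀ t, ω t ∈ Acc → ω (t + 1) ∈ Acc := by
  filter_upwards [hν.ae_transition_ne_zero s] with ω hω t ht
  exact habs _ ht ((PMF.mem_support_iff _ _).2 (hω t))

variable [MeasurableSingletonClass S]

theorem measurableSet_safeSet (Acc : Set S) : MeasurableSet (safeSet Acc) := by
  rw [safeSet, ofPred_forall]
  exact .iInter fun t => (Set.to_countable Accᶜ).measurableSet.preimage (measurable_pi_apply t)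

theorem measurable_retTerm (Acc : Set S) (γacc γ rn : ℝ) (t : ℕ) :
    Measurable fun ω => retTerm Acc γacc γ rn ω t := by
  unfold retTerm
  fun_prop (disch := exact measurable_of_countable _)

theorem IsPathMeasure.tendsto_integral_ret (hν : IsPathMeasure p ν) {Acc : Set S}
    (habs : ∀ s ∈ Acc, (p s).support ⊆ Acc) {γacc : ℝ} (hγacc₀ : 0 ≤ γacc) (hγacc₁ : γacc < 1)
    (rn : ℝ) (s : S) :
    Tendsto (fun γ => ∫ ω, Ret Acc γacc γ rn ω ∂ν s) (𝓝[<] 1)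
      (𝓝 (rn * (1 - (ν s).real (safeSet Acc)))) := by
  have := hν.1 s
  have hsum : ∀ᵐ ω ∂ν s, ∃ T : ℕ, ∀ γ, HasSum (retTerm Acc γacc γ rn ω)
      ((safeSet Acc)ᶜ.indicator (fun _ => rn * γ ^ T) ω) := by
    filter_upwards [hν.ae_absorbing habs s] with ω hω
    exact exists_hasSum_retTerm hγacc₀ hγacc₁ hω
  have hmeas : ∀ γ, AEStronglyMeasurable (Ret Acc γacc γ rn) (ν s) := fun γ =>
    aestronglyMeasurable_of_tendsto_ae atTop
      (fun n => (Finset.measurable_sum _ fun t _ =>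
        measurable_retTerm Acc γacc γ rn t).aestronglyMeasurable)
      (hsum.mono fun ω ⟨_, h⟩ => (h γ).summable.hasSum.tendsto_sum_nat)
  have hbound : ∀ᶠ γ in 𝓝[<] (1 : ℝ), ∀ᵐ ω ∂ν s, ‖Ret Acc γacc γ rn ω‖ ≤ |rn| := by
    filter_upwards [Ioo_mem_nhdsLT zero_lt_one] with γ hγ
    filter_upwards [hsum] with ω ⟨T, h⟩
    rw [ret_eq_of_hasSum (h γ)]
    refine (norm_indicator_le_norm_self _ _).trans ?_
    rw [Real.norm_eq_abs, abs_mul, abs_pow]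
    exact mul_le_of_le_one_right (abs_nonneg rn)
      (pow_le_one₀ (abs_nonneg γ) (abs_le.2 ⟨by linarith [hγ.1], hγ.2.le⟩))
  have hlim : ∀ᵐ ω ∂ν s, Tendsto (fun γ => Ret Acc γacc γ rn ω) (𝓝[<] 1)
      (𝓝 ((safeSet Acc)ᶜ.indicator (fun _ => rn) ω)) := by
    filter_upwards [hsum] with ω ⟨T, h⟩
    simp_rw [ret_eq_of_hasSum (h _)]
    by_cases hω : ω ∈ (safeSet Acc)ᶜ
    · simp only [indicator_of_mem hω]
      exact ((continuous_const.mul (continuous_pow T)).tendsto' 1 rn (by simp)).mono_left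
        nhdsWithin_le_nhds
    · simp only [indicator_of_notMem hω]
      exact tendsto_const_nhds
  have := tendsto_integral_filter_of_dominated_convergence _ (.of_forall hmeas) hbound
    (integrable_const |rn|) hlim
  rwa [integral_indicator_const _ (measurableSet_safeSet Acc).compl,
    probReal_compl_eq_one_sub (measurableSet_safeSet Acc), smul_eq_mul, mul_comm] at this

end PathMeasure

theorem optimal_policy_attains_max_safety_prob_general
    [Fintype S] [MeasurableSpace S] [MeasurableSingletonClass S]
    [∀ s, Fintype (A s)]
    (P : (s : S) → A s → PMF S) (Acc : Set S)
    (habs : ∀ s ∈ Acc, ∀ a : A s, (P s a).support ⊆ Acc)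
    (μ : ((s : S) → A s) → S → Measure (ℕ → S))
    (hμ : ∀ π : (s : S) → A s, IsPathMeasure (fun s => P s (π s)) (μ π))
    (rn γacc : ℝ) (hrn : rn < 0) (hγacc : 0 < γacc ∧ γacc < 1) :
    ∃ γ' : ℝ, 0 < γ' ∧ γ' < 1 ∧ ∀ γ : ℝ, γ' < γ → γ < 1 →
      ∀ πo : (s : S) → A s, IsOptimal Acc γacc γ rn μ πo →
        ∀ s : S, μ πo s {ω | ∀ t, ω t ∉ Acc} =
          ⨆ π : (s' : S) → A s', μ π s {ω | ∀ t, ω t ∉ Acc} := by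
  have (π : (s : S) → A s) (s : S) : IsProbabilityMeasure (μ π s) := (hμ π).1 s
  have hlim (π : (s : S) → A s) (s : S) := (hμ π).tendsto_integral_ret
    (fun s hs => habs s hs (π s)) hγacc.1.le hγacc.2 rn s
  have hsafer : ∀ᶠ γ in 𝓝[<] (1 : ℝ), ∀ π π' s, μ π s (safeSet Acc) < μ π' s (safeSet Acc) →
      Valp Acc γacc γ rn μ π s < Valp Acc γacc γ rn μ π' s := by
    simp only [eventually_all]
    intro π π' s hlt
    have hlt' : (μ π s).real (safeSet Acc) < (μ π' s).real (safeSet Acc) :=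
      (ENNReal.toReal_lt_toReal (measure_ne_top _ _) (measure_ne_top _ _)).2 hlt
    exact (hlim π s).eventually_lt (hlim π' s) (by nlinarith)
  obtain ⟨l, hl, hsub⟩ := mem_nhdsLT_iff_exists_Ioo_subset.1 hsafer
  refine ⟨max l (1 / 2), lt_max_of_lt_right one_half_pos, max_lt hl one_half_lt_one,
    fun γ hγ hγ1 πo hopt s => ?_⟩
  refine le_antisymm (le_iSup (fun π => μ π s _) πo) (iSup_le fun π => not_lt.1 fun hlt => ?_)
  have hval := hsub ⟨(le_max_left _ _).trans_lt hγ, hγ1⟩ πo π s hlt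
  exact (hval.trans_le ((le_ciSup (Set.finite_range _).bddAbove π).trans_eq (hopt s).symm)).false

/-- for `γ` close enough to 1, every optimal policy attains the maximum
probability of satisfying the safety condition at every state. -/
theorem optimal_policy_attains_max_safety_prob
    [Fintype S] [Nonempty S] [MeasurableSpace S] [MeasurableSingletonClass S]
    [∀ s, Fintype (A s)] [∀ s, Nonempty (A s)]
    (P : (s : S) → A s → PMF S) (Acc : Set S)
    (habs : ∀ s ∈ Acc, ∀ a : A s, (P s a).support ⊆ Acc)
    (μ : ((s : S) → A s) → S → Measure (ℕ → S))
    (hμ : ∀ π : (s : S) → A s, IsPathMeasure (fun s => P s (π s)) (μ π))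
    (rn γacc : ℝ) (hrn : rn < 0) (hγacc : 0 < γacc ∧ γacc < 1) :
    ∃ γ' : ℝ, 0 < γ' ∧ γ' < 1 ∧ ∀ γ : ℝ, γ' < γ → γ < 1 →
      ∀ πo : (s : S) → A s, IsOptimal Acc γacc γ rn μ πo →
        ∀ s : S, μ πo s {ω | ∀ t, ω t ∉ Acc} =
          ⨆ π : (s' : S) → A s', μ π s {ω | ∀ t, ω t ∉ Acc} :=
  optimal_policy_attains_max_safety_prob_general P Acc habs μ hμ rn γacc hrn hγacc
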